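/- Let A be a commutative algebra over ℂ, let n ≥ 1 be an integer, F, a ∈ A, and let ζ ∈ ℂ be a primitive n-th root of unity. Let B := A[u, v]/(uv − F, u^n + v^n − 2a), and let σ be the A-algebra automorphism of B determined by σ(u) = ζ·u, σ(v) = ζ⁻¹·v. Then the subalgebra B^σ of σ-invariant elements of B is a free A-module with basis {1, u^n − v^n}, and in B one has the identity (u^n − v^n)² = 4·(a² − F^n). -/

import Mathlib

noncomputable section

/-- The ideal `(uv − F, uⁿ + vⁿ − 2a)` in `A[u, v]`. -/
def dihedralIdeal (A : Type) [CommRing A] (n : ℕ) (F a : A) :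
    Ideal (MvPolynomial (Fin 2) A) :=
  Ideal.span {MvPolynomial.X 0 * MvPolynomial.X 1 - MvPolynomial.C F,
    MvPolynomial.X 0 ^ n + MvPolynomial.X 1 ^ n - MvPolynomial.C (2 * a)}

/-- The ring `B = A[u, v]/(uv − F, uⁿ + vⁿ − 2a)`, the coordinate ring of the simple
dihedral cover of `Spec A` determined by the data `F` and `a`. -/
abbrev DihedralCoverRing (A : Type) [CommRing A] (n : ℕ) (F a : A) : Type :=
  MvPolynomial (Fin 2) A ⧸ dihedralIdeal A n F a

/-- The image `u` of the first variable in `B`. -/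
def uElt (A : Type) [CommRing A] (n : ℕ) (F a : A) : DihedralCoverRing A n F a :=
  Ideal.Quotient.mk _ (MvPolynomial.X 0)

/-- The image `v` of the second variable in `B`. -/
def vElt (A : Type) [CommRing A] (n : ℕ) (F a : A) : DihedralCoverRing A n F a :=
  Ideal.Quotient.mk _ (MvPolynomial.X 1)

/-- The subalgebra of `σ`-invariant elements of `B`. -/
def fixedSubalgebra (A : Type) [CommRing A] (n : ℕ) (F a : A)
    (σ : DihedralCoverRing A n F a ≃ₐ[A] DihedralCoverRing A n F a) :
    Subalgebra A (DihedralCoverRing A n F a) :=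
  AlgHom.equalizer ((σ : DihedralCoverRing A n F a ≃ₐ[A] DihedralCoverRing A n F a) :
      DihedralCoverRing A n F a →ₐ[A] DihedralCoverRing A n F a)
    ((AlgEquiv.refl : DihedralCoverRing A n F a ≃ₐ[A] DihedralCoverRing A n F a) :
      DihedralCoverRing A n F a →ₐ[A] DihedralCoverRing A n F a)

/-!
The map sending `uⁱvʲ` to `F^min(i,j) • x^((i - j)/n)`, resp. `F^min(i,j) • y^((j - i)/n)`, when
`n ∣ i - j`, and to `0` otherwise, is an `A`-linear map from `A[u, v]` to
`A[x]/(x² - 2a x + Fⁿ)`, with `y = 2a - x`, that kills the ideal of relations: `x + y = 2a` and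
`x y = Fⁿ` play the roles of `uⁿ + vⁿ` and `(uv)ⁿ`. It sends `1` and `uⁿ - vⁿ` to `1` and
`2x - 2a`, so these two are linearly independent over `A`, as `2` is invertible.

Conversely, `σ` multiplies `uⁱvʲ` by the `n`-th root of unity `ζ^(i - j)`, so averaging over the
powers of `σ` maps everything into the span of the monomials with `n ∣ i - j`, and it is
multiplication by `n` on invariants. Such a monomial is `Fʲ (uⁿ)^q` or `Fⁱ (vⁿ)^q`, and
`uⁿ, vⁿ = a ± (uⁿ - vⁿ)/2` lie in `A ⊕ A (uⁿ - vⁿ)`, which is closed under products because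
`(uⁿ - vⁿ)² = 4 (a² - Fⁿ)`.
-/

lemma isUnit_two_of_algebra (K : Type*) {A : Type*} [Field K] [NeZero (2 : K)] [Semiring A]
    [Algebra K A] : IsUnit (2 : A) := by
  rw [← map_ofNat (algebraMap K A) 2]
  exact two_ne_zero.isUnit.map _

section QuadraticSpan

open Submodule

variable {A R : Type*} [CommRing A] [CommRing R] [Algebra A R]

lemma mul_mem_span_one_pair {w : R} {c : A} (hw : w ^ 2 = algebraMap A R c) {p q : R}
    (hp : p ∈ span A {1, w}) (hq : q ∈ span A {1, w}) : p * q ∈ span A {1, w} := by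
  obtain ⟨s, t, rfl⟩ := mem_span_pair.mp hp
  obtain ⟨s', t', rfl⟩ := mem_span_pair.mp hq
  refine mem_span_pair.mpr ⟨s * s' + c * t * t', s * t' + t * s', ?_⟩
  simp only [Algebra.smul_def, map_add, map_mul, mul_one]
  linear_combination (-algebraMap A R t * algebraMap A R t') * hw

def spanOnePairSubalgebra {w : R} {c : A} (hw : w ^ 2 = algebraMap A R c) : Subalgebra A R :=
  (span A {1, w}).toSubalgebra (subset_span (Set.mem_insert 1 _))
    fun _ _ => mul_mem_span_one_pair hw

variable {n : ℕ} {F a : A} {u v : R}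

lemma sub_pow_sq_eq (huv : u * v = algebraMap A R F)
    (hsum : u ^ n + v ^ n = algebraMap A R (2 * a)) :
    (u ^ n - v ^ n) ^ 2 = algebraMap A R (4 * (a ^ 2 - F ^ n)) := by
  calc (u ^ n - v ^ n) ^ 2 = (u ^ n + v ^ n) ^ 2 - 4 * (u * v) ^ n := by ring
    _ = _ := by rw [hsum, huv]; simp only [map_mul, map_sub, map_pow, map_ofNat]; ring

lemma pow_mul_pow_mem_of_dvd (S : Subalgebra A R) (huv : u * v = algebraMap A R F)
    (hu : u ^ n ∈ S) (hv : v ^ n ∈ S) {i j : ℕ} (hij : (n : ℤ) ∣ i - j) : u ^ i * v ^ j ∈ S := by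
  wlog hji : j ≤ i generalizing u v i j
  · rw [mul_comm]
    exact this (by rwa [mul_comm]) hv hu (by rwa [dvd_sub_comm]) (by omega)
  obtain ⟨k, rfl⟩ := Nat.exists_eq_add_of_le hji
  obtain ⟨q, rfl⟩ : n ∣ k := by exact_mod_cast (by simpa using hij : (n : ℤ) ∣ k)
  have : u ^ (j + n * q) * v ^ j = algebraMap A R (F ^ j) * (u ^ n) ^ q := by
    rw [map_pow, ← huv]; ring
  rw [this]
  exact S.mul_mem (S.algebraMap_mem _) (S.pow_mem hu q)

lemma pow_mem_span_one_sub_pow (h2 : IsUnit (2 : A))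
    (hsum : u ^ n + v ^ n = algebraMap A R (2 * a)) :
    u ^ n ∈ span A {1, u ^ n - v ^ n} := by
  obtain ⟨b, hb⟩ := h2.exists_left_inv
  refine mem_span_pair.mpr ⟨a, b, ?_⟩
  have hb' : algebraMap A R b * 2 = 1 := by
    rw [← map_ofNat (algebraMap A R), ← map_mul, hb, map_one]
  simp only [Algebra.smul_def, mul_one, map_mul, map_ofNat] at hsum ⊢
  linear_combination (-algebraMap A R b) * hsum + (u ^ n - algebraMap A R a) * hb'

end QuadraticSpan

section Averaging

open Submodule

lemma mem_of_isFixedPt_of_span_eigenvectors {K A R : Type*} [Field K] [CommRing A] [Algebra K A]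
    [AddCommGroup R] [Module A R] [Module K R] [IsScalarTower K A R] {n : ℕ} (hn : (n : K) ≠ 0)
    (σ : Module.End A R) (W : Submodule A R) {s : Set R} (hs : span A s = ⊤)
    (heig : ∀ y ∈ s, ∃ c : K, c ^ n = 1 ∧ σ y = c • y ∧ (c = 1 → y ∈ W)) {x : R} (hx : σ x = x) :
    x ∈ W := by
  set T := ∑ k ∈ Finset.range n, σ ^ k
  have hT : ∀ y, T y ∈ W := by
    intro y
    have hy : y ∈ span A s := hs ▸ mem_top
    induction hy using Submodule.span_induction with
    | mem y hy =>
      obtain ⟨c, hcn, hσy, hyW⟩ := heig y hy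
      have hpow : ∀ k : ℕ, (σ ^ k) y = c ^ k • y := by
        intro k
        induction k with
        | zero => simp
        | succ k ih => rw [pow_succ', Module.End.mul_apply, ih, LinearMap.map_smul_of_tower, hσy,
            smul_smul, pow_succ]
      rw [LinearMap.sum_apply, Finset.sum_congr rfl fun k _ => hpow k, ← Finset.sum_smul]
      by_cases hc : c = 1
      · simpa [hc] using W.smul_of_tower_mem (n : K) (hyW hc)
      · rw [geom_sum_eq hc, hcn, sub_self, zero_div, zero_smul]
        exact W.zero_mem
    | zero => simp
    | add y z _ _ hy hz => rw [map_add]; exact W.add_mem hy hz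
    | smul a y _ hy => rw [map_smul]; exact W.smul_mem a hy
  have hTx : T x = (n : K) • x := by
    simp [T, LinearMap.sum_apply, Module.End.pow_apply, Function.iterate_fixed hx,
      Nat.cast_smul_eq_nsmul]
  simpa [hTx, smul_smul, hn] using W.smul_of_tower_mem (n : K)⁻¹ (hT x)

end Averaging

lemma AdjoinRoot.eq_zero_of_algebraMap_add_mul_root_eq_zero {A : Type*} [CommRing A]
    {g : Polynomial A} (hg : g.Monic) (hdeg : 1 < g.degree) {s t : A}
    (h : algebraMap A (AdjoinRoot g) s + algebraMap A (AdjoinRoot g) t * AdjoinRoot.root g = 0) :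
    s = 0 ∧ t = 0 := by
  have hP : Polynomial.C s + Polynomial.C t * Polynomial.X = 0 := by
    by_contra hne
    refine AdjoinRoot.mk_ne_zero_of_degree_lt hg hne
      ((Polynomial.degree_linear_le.trans_eq' (by rw [add_comm])).trans_lt hdeg) ?_
    simpa [AdjoinRoot.algebraMap_eq] using h
  exact ⟨by simpa using congr_arg (Polynomial.coeff · 0) hP,
    by simpa using congr_arg (Polynomial.coeff · 1) hP⟩

lemma MvPolynomial.monomial_one_fin_two {A : Type*} [CommRing A] (d : Fin 2 →₀ ℕ) :
    MvPolynomial.monomial d (1 : A) = MvPolynomial.X 0 ^ d 0 * MvPolynomial.X 1 ^ d 1 := by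
  rw [MvPolynomial.monomial_eq, Finsupp.prod_fintype _ _ (by simp), Fin.prod_univ_two, map_one,
    one_mul]

namespace DihedralCoverRing

section InvariantPart

variable {A : Type} {R : Type*} [CommRing A] [CommRing R] [Algebra A R] {n : ℕ}

def invariantPow (n : ℕ) (x : R) (k : ℕ) : R := if n ∣ k then x ^ (k / n) else 0

@[simp]
lemma invariantPow_zero (x : R) : invariantPow n x 0 = 1 := by
  simp [invariantPow]

lemma invariantPow_add_self (hn : 0 < n) (x : R) (k : ℕ) :
    invariantPow n x (k + n) = x * invariantPow n x k := by
  by_cases hk : n ∣ k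
  · rw [invariantPow, if_pos (dvd_add hk dvd_rfl), invariantPow, if_pos hk,
      Nat.add_div_right k hn, pow_succ']
  · rw [invariantPow, if_neg (by rwa [Nat.dvd_add_self_right]), invariantPow, if_neg hk,
      mul_zero]

lemma invariantPow_self (hn : 0 < n) (x : R) : invariantPow n x n = x := by
  simpa using invariantPow_add_self hn x 0

lemma invariantPow_of_lt {k : ℕ} (hk : 0 < k) (hkn : k < n) (x : R) :
    invariantPow n x k = 0 :=
  if_neg (Nat.not_dvd_of_pos_of_lt hk hkn)

def invariantMonomial (n : ℕ) (F : A) (x y : R) (i j : ℕ) : R :=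
  if j ≤ i then F ^ j • invariantPow n x (i - j) else F ^ i • invariantPow n y (j - i)

lemma invariantMonomial_comm (F : A) (x y : R) (i j : ℕ) :
    invariantMonomial n F x y i j = invariantMonomial n F y x j i := by
  unfold invariantMonomial
  rcases lt_trichotomy i j with h | rfl | h
  · rw [if_neg h.not_ge, if_pos h.le]
  · simp
  · rw [if_pos h.le, if_neg h.not_ge]

lemma invariantMonomial_add_add (F : A) (x y : R) (i j m : ℕ) :
    invariantMonomial n F x y (i + m) (j + m) = F ^ m • invariantMonomial n F x y i j := by
  unfold invariantMonomial
  split_ifs <;> try omega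
  · rw [smul_smul, ← pow_add, Nat.add_sub_add_right, add_comm j]
  · rw [smul_smul, ← pow_add, Nat.add_sub_add_right, add_comm i]


open MvPolynomial

def invariantPart (n : ℕ) (F : A) (x y : R) : MvPolynomial (Fin 2) A →ₗ[A] R :=
  (basisMonomials (Fin 2) A).constr A fun d => invariantMonomial n F x y (d 0) (d 1)

variable {F a : A} {x y : R}

lemma invariantMonomial_add_self_add (hn : 0 < n) (hsum : x + y = algebraMap A R (2 * a))
    (hprod : x * y = algebraMap A R (F ^ n)) (i j : ℕ) :
    invariantMonomial n F x y (i + n) j + invariantMonomial n F x y i (j + n) =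
      (2 * a) • invariantMonomial n F x y i j := by
  wlog hji : j ≤ i generalizing x y i j
  · have := this (y := x) (x := y) (by rwa [add_comm]) (by rwa [mul_comm]) j i (by omega)
    rwa [add_comm, invariantMonomial_comm, invariantMonomial_comm (i := i + n),
      invariantMonomial_comm (i := i)]
  obtain ⟨k, rfl⟩ := Nat.exists_eq_add_of_le hji
  have key : invariantMonomial n F x y (k + n) 0 + invariantMonomial n F x y k n =
      (2 * a) • invariantMonomial n F x y k 0 := by
    simp only [invariantMonomial, zero_le, if_true, pow_zero, one_smul, Nat.sub_zero]
    rw [invariantPow_add_self hn]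
    split_ifs with hk
    · obtain ⟨m, rfl⟩ := Nat.exists_eq_add_of_le hk
      rw [Nat.add_sub_cancel_left, add_comm n m, invariantPow_add_self hn]
      simp only [Algebra.smul_def, ← hsum, ← hprod]
      ring
    · rcases Nat.eq_zero_or_pos k with rfl | hk0
      · rw [invariantPow_zero, Nat.sub_zero, invariantPow_self hn, pow_zero, one_smul,
          Algebra.smul_def, ← hsum]
        ring
      · rw [invariantPow_of_lt hk0 (by omega), invariantPow_of_lt (by omega) (by omega)]
        simp
  calc _ = F ^ j • (invariantMonomial n F x y (k + n) 0 + invariantMonomial n F x y k n) := by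
        rw [smul_add, ← invariantMonomial_add_add, ← invariantMonomial_add_add, zero_add]
        ring_nf
    _ = _ := by
        rw [key, smul_comm, ← invariantMonomial_add_add, zero_add, add_comm k j]

lemma invariantPart_X_pow_mul_X_pow (i j : ℕ) :
    invariantPart n F x y (X 0 ^ i * X 1 ^ j) = invariantMonomial n F x y i j := by
  have := (basisMonomials (Fin 2) A).constr_basis A
    (fun d : Fin 2 →₀ ℕ => invariantMonomial n F x y (d 0) (d 1))
    (Finsupp.single 0 i + Finsupp.single 1 j)
  simpa [invariantPart, monomial_one_fin_two] using this

lemma invariantPart_mul_eq_zero {g : MvPolynomial (Fin 2) A}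
    (hg : ∀ i j, invariantPart n F x y (X 0 ^ i * X 1 ^ j * g) = 0) (p : MvPolynomial (Fin 2) A) :
    invariantPart n F x y (p * g) = 0 := by
  suffices invariantPart n F x y ∘ₗ LinearMap.mulRight A g = 0 from
    LinearMap.congr_fun this p
  refine MvPolynomial.linearMap_ext fun d => LinearMap.ext_ring ?_
  simpa only [LinearMap.comp_apply, LinearMap.mulRight_apply, LinearMap.zero_apply,
    monomial_one_fin_two] using hg (d 0) (d 1)

lemma invariantPart_eq_zero_of_mem (hn : 0 < n) (hsum : x + y = algebraMap A R (2 * a))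
    (hprod : x * y = algebraMap A R (F ^ n)) {p : MvPolynomial (Fin 2) A}
    (hp : p ∈ dihedralIdeal A n F a) : invariantPart n F x y p = 0 := by
  obtain ⟨p, q, rfl⟩ := Ideal.mem_span_pair.mp hp
  rw [map_add, invariantPart_mul_eq_zero, invariantPart_mul_eq_zero, add_zero]
  · intro i j
    have : X 0 ^ i * X 1 ^ j * (X 0 ^ n + X 1 ^ n - C (2 * a)) = X 0 ^ (i + n) * X 1 ^ j +
        X 0 ^ i * X 1 ^ (j + n) - (2 * a) • (X 0 ^ i * X 1 ^ j : MvPolynomial (Fin 2) A) := by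
      rw [smul_eq_C_mul]; ring
    rw [this, map_sub, map_add, map_smul]
    simp only [invariantPart_X_pow_mul_X_pow, invariantMonomial_add_self_add hn hsum hprod,
      sub_self]
  · intro i j
    have : X 0 ^ i * X 1 ^ j * (X 0 * X 1 - C F) = X 0 ^ (i + 1) * X 1 ^ (j + 1) -
        F • (X 0 ^ i * X 1 ^ j : MvPolynomial (Fin 2) A) := by
      rw [smul_eq_C_mul]; ring
    rw [this, map_sub, map_smul]
    simp only [invariantPart_X_pow_mul_X_pow, invariantMonomial_add_add, pow_one, sub_self]

end InvariantPart

section Relations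

variable {A : Type} [CommRing A] {n : ℕ} {F a : A}

lemma uElt_mul_vElt :
    uElt A n F a * vElt A n F a = algebraMap A (DihedralCoverRing A n F a) F := by
  rw [uElt, vElt, ← map_mul, ← sub_eq_zero,
    IsScalarTower.algebraMap_apply A (MvPolynomial (Fin 2) A), Ideal.Quotient.algebraMap_eq, ← map_sub, Ideal.Quotient.eq_zero_iff_mem]
  exact Ideal.subset_span (Set.mem_insert _ _)

lemma uElt_pow_add_vElt_pow :
    uElt A n F a ^ n + vElt A n F a ^ n = algebraMap A (DihedralCoverRing A n F a) (2 * a) := by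
  rw [uElt, vElt, ← map_pow, ← map_pow, ← map_add, ← sub_eq_zero,
    IsScalarTower.algebraMap_apply A (MvPolynomial (Fin 2) A), Ideal.Quotient.algebraMap_eq,
    ← map_sub, Ideal.Quotient.eq_zero_iff_mem]
  exact Ideal.subset_span (Set.mem_insert_of_mem _ rfl)

end Relations

open MvPolynomial in
lemma linearIndependent_one_uElt_pow_sub_vElt_pow {A : Type} [CommRing A] {n : ℕ} (hn : 0 < n)
    {F a : A} (h2 : IsUnit (2 : A)) :
    LinearIndependent A ![1, uElt A n F a ^ n - vElt A n F a ^ n] := by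
  rw [LinearIndependent.pair_iff]
  intro s t hst
  nontriviality A
  set g : Polynomial A := .X ^ 2 - .C (2 * a) * .X + .C (F ^ n) with hg_def
  have hg : g.Monic := by rw [hg_def]; monicity!
  have hdeg : g.degree = 2 := by rw [hg_def]; compute_degree!
  let x := AdjoinRoot.root g
  let y := algebraMap A (AdjoinRoot g) (2 * a) - x
  have hsum : x + y = algebraMap A _ (2 * a) := add_sub_cancel _ _
  have hprod : x * y = algebraMap A _ (F ^ n) := by
    have hx : x ^ 2 - algebraMap A _ (2 * a) * x + algebraMap A _ (F ^ n) = 0 := by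
      have := AdjoinRoot.eval₂_root g
      simpa only [hg_def, Polynomial.eval₂_add, Polynomial.eval₂_sub, Polynomial.eval₂_mul,
        Polynomial.eval₂_C, Polynomial.eval₂_X, Polynomial.eval₂_X_pow,
        ← AdjoinRoot.algebraMap_eq] using this
    linear_combination -hx
  have hmem : s • (X 0 ^ 0 * X 1 ^ 0) + t • (X 0 ^ n * X 1 ^ 0 - X 0 ^ 0 * X 1 ^ n) ∈
      dihedralIdeal A n F a := by
    rw [← Ideal.Quotient.eq_zero_iff_mem, ← Ideal.Quotient.mkₐ_eq_mk A, ← hst]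
    simp only [map_add, map_smul, map_sub, map_pow, map_one, pow_zero, mul_one, one_mul]
    rfl
  have hzero := invariantPart_eq_zero_of_mem hn hsum hprod hmem
  rw [map_add, map_smul, map_smul, map_sub, invariantPart_X_pow_mul_X_pow,
    invariantPart_X_pow_mul_X_pow, invariantPart_X_pow_mul_X_pow] at hzero
  simp only [invariantMonomial, le_refl, zero_le, if_true, if_neg (Nat.not_le.mpr hn),
    Nat.sub_zero, pow_zero, one_smul, invariantPow_zero, invariantPow_self hn] at hzero
  obtain ⟨hs, ht⟩ := AdjoinRoot.eq_zero_of_algebraMap_add_mul_root_eq_zero hg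
    (by rw [hdeg]; norm_num) (s := s - 2 * a * t) (t := 2 * t) (by
      simp only [Algebra.smul_def, y, map_sub, map_mul, map_ofNat] at hzero ⊢
      linear_combination hzero)
  have ht : t = 0 := h2.mul_right_eq_zero.mp ht
  exact ⟨by simpa [ht] using hs, ht⟩

section Invariants

open Submodule

variable {A : Type} [CommRing A] {n : ℕ} {F a : A}

lemma adjoin_uElt_vElt : Algebra.adjoin A {uElt A n F a, vElt A n F a} = ⊤ := by
  have : {uElt A n F a, vElt A n F a} =
      Ideal.Quotient.mkₐ A (dihedralIdeal A n F a) '' Set.range MvPolynomial.X := by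
    ext y
    simp [Fin.exists_fin_two, uElt, vElt, eq_comm]
  rw [this, Algebra.adjoin_image, MvPolynomial.adjoin_range_X, Algebra.map_top,
    AlgHom.range_eq_top]
  exact Ideal.Quotient.mkₐ_surjective A _

lemma span_closure_uElt_vElt :
    span A (Submonoid.closure {uElt A n F a, vElt A n F a} : Set (DihedralCoverRing A n F a)) =
      ⊤ := by
  rw [← Algebra.adjoin_eq_span, adjoin_uElt_vElt, Algebra.top_toSubmodule]

variable {σ : DihedralCoverRing A n F a ≃ₐ[A] DihedralCoverRing A n F a}

lemma mem_fixedSubalgebra_iff {x : DihedralCoverRing A n F a} :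
    x ∈ fixedSubalgebra A n F a σ ↔ σ x = x :=
  AlgHom.mem_equalizer _ _ _

variable [Algebra ℂ A] {ζ : ℂ}

lemma map_uElt_pow_mul_vElt_pow
    (hσu : σ (uElt A n F a) = algebraMap ℂ (DihedralCoverRing A n F a) ζ * uElt A n F a)
    (hσv : σ (vElt A n F a) = algebraMap ℂ (DihedralCoverRing A n F a) ζ⁻¹ * vElt A n F a)
    (i j : ℕ) :
    σ (uElt A n F a ^ i * vElt A n F a ^ j) =
      (ζ ^ i * ζ⁻¹ ^ j) • (uElt A n F a ^ i * vElt A n F a ^ j) := by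
  rw [map_mul, map_pow, map_pow, hσu, hσv, ← Algebra.smul_def, ← Algebra.smul_def, smul_pow,
    smul_pow, smul_mul_smul_comm]

lemma toSubmodule_fixedSubalgebra (hn : 0 < n) (hζ : IsPrimitiveRoot ζ n)
    (hσu : σ (uElt A n F a) = algebraMap ℂ (DihedralCoverRing A n F a) ζ * uElt A n F a)
    (hσv : σ (vElt A n F a) = algebraMap ℂ (DihedralCoverRing A n F a) ζ⁻¹ * vElt A n F a) :
    Subalgebra.toSubmodule (fixedSubalgebra A n F a σ) =
      span A {1, uElt A n F a ^ n - vElt A n F a ^ n} := by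
  have hζn : ζ ^ n = 1 := hζ.pow_eq_one
  refine le_antisymm (fun x hx => ?_) (span_le.mpr ?_)
  · let S := spanOnePairSubalgebra
      (sub_pow_sq_eq (uElt_mul_vElt (A := A) (n := n) (F := F) (a := a)) uElt_pow_add_vElt_pow)
    refine mem_of_isFixedPt_of_span_eigenvectors (K := ℂ) (n := n) (by simpa using hn.ne')
      σ.toLinearMap S.toSubmodule span_closure_uElt_vElt ?_ (mem_fixedSubalgebra_iff.mp hx)
    have hu : uElt A n F a ^ n ∈ S :=
      pow_mem_span_one_sub_pow (isUnit_two_of_algebra ℂ) uElt_pow_add_vElt_pow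
    have hv : vElt A n F a ^ n ∈ S := by
      rw [eq_sub_of_add_eq' uElt_pow_add_vElt_pow]
      exact S.sub_mem (S.algebraMap_mem _) hu
    rintro _ hy
    obtain ⟨i, j, rfl⟩ := (Submonoid.mem_closure_pair _ _ _).mp hy
    refine ⟨ζ ^ i * ζ⁻¹ ^ j, ?_, map_uElt_pow_mul_vElt_pow hσu hσv i j, fun h1 => ?_⟩
    · rw [mul_pow, ← pow_mul, ← pow_mul, mul_comm i, mul_comm j, pow_mul, pow_mul, hζn, inv_pow,
        hζn]
      simp
    · refine pow_mul_pow_mem_of_dvd S uElt_mul_vElt hu hv ?_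
      rw [← hζ.zpow_eq_one_iff_dvd, zpow_sub₀ (hζ.ne_zero hn.ne'), zpow_natCast, zpow_natCast,
        ← h1, inv_pow, div_eq_mul_inv]
  · rintro _ (rfl | rfl) <;> rw [SetLike.mem_coe, Subalgebra.mem_toSubmodule,
      mem_fixedSubalgebra_iff]
    · exact map_one σ
    · rw [map_sub, map_pow, map_pow, hσu, hσv, mul_pow, mul_pow, ← map_pow, ← map_pow, hζn,
        inv_pow, hζn, inv_one, map_one, one_mul, one_mul]

end Invariants

end DihedralCoverRing

set_option synthInstance.maxHeartbeats 400000 in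
theorem dihedralCoverRing_sigma_invariants
    (A : Type) [CommRing A] [Algebra ℂ A] (n : ℕ) (hn : 1 ≤ n) (F a : A)
    (ζ : ℂ) (hζ : IsPrimitiveRoot ζ n)
    (σ : DihedralCoverRing A n F a ≃ₐ[A] DihedralCoverRing A n F a)
    (hσu : σ (uElt A n F a) =
      algebraMap ℂ (DihedralCoverRing A n F a) ζ * uElt A n F a)
    (hσv : σ (vElt A n F a) =
      algebraMap ℂ (DihedralCoverRing A n F a) ζ⁻¹ * vElt A n F a) :
    (∃ b : Module.Basis (Fin 2) A (fixedSubalgebra A n F a σ),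
      (b 0 : DihedralCoverRing A n F a) = 1 ∧
      (b 1 : DihedralCoverRing A n F a) = uElt A n F a ^ n - vElt A n F a ^ n) ∧
    (uElt A n F a ^ n - vElt A n F a ^ n) ^ 2 =
      algebraMap A (DihedralCoverRing A n F a) (4 * (a ^ 2 - F ^ n)) := by
  have hli := DihedralCoverRing.linearIndependent_one_uElt_pow_sub_vElt_pow (F := F) (a := a) hn
    (isUnit_two_of_algebra ℂ)
  have hspan : Submodule.span A (Set.range ![1, uElt A n F a ^ n - vElt A n F a ^ n]) =
      Subalgebra.toSubmodule (fixedSubalgebra A n F a σ) := by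
    rw [DihedralCoverRing.toSubmodule_fixedSubalgebra hn hζ hσu hσv, Matrix.range_cons_cons_empty]
  refine ⟨⟨(Module.Basis.span hli).map (LinearEquiv.ofEq _ _ hspan), ?_, ?_⟩,
    sub_pow_sq_eq DihedralCoverRing.uElt_mul_vElt DihedralCoverRing.uElt_pow_add_vElt_pow⟩ <;>
    exact (LinearEquiv.coe_ofEq_apply hspan _).trans
      (congrArg Subtype.val (Module.Basis.span_apply hli _))
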